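/- Define $\mathcal{G}_\varphi(\epsilon_1,\epsilon_2,\epsilon_3) = \frac{1}{6}\sum_{\sigma \in S_3} H_\varphi(\epsilon_{\sigma(1)},\epsilon_{\sigma(2)},\epsilon_{\sigma(3)})\, \Phi(\epsilon_{\sigma(1)},\epsilon_{\sigma(2)},\epsilon_{\sigma(3)})$, where $H_\varphi(x,y,z) = \varphi(z) + \varphi(x+y-z) - \varphi(x) - \varphi(y)$ and $\Phi(x,y,z) = \min\{\sqrt{x}, \sqrt{y}, \sqrt{z}, \sqrt{(x+y-z)_+}\}$. If $\varphi : [0,\infty) \to \mathbb{R}$ is convex, then $\mathcal{G}_\varphi(\epsilon_1,\epsilon_2,\epsilon_3) \geq 0$ for all $\epsilon_1,\epsilon_2,\epsilon_3 > 0$; if $\varphi$ is concave, then $\mathcal{G}_\varphi \leq 0$. -/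

import Mathlib

/-!
On a triple `a ≤ b ≤ c` the six orderings collapse, by the symmetry of `H_φ Φ` in its first two
arguments, to three terms. The term with `z = c` has `H_φ ≥ 0` because `x + y - z ≤ x, y ≤ z` is a
spread of `x, y` with the same sum. The other two terms carry the same weight `Φ = √a`, and the sum
of their `H_φ`'s is `φ(a + c - b) + φ(b + c - a) - 2 φ(c) ≥ 0`. Since `𝓖_φ` is invariant under
permuting `ε`, sorting `ε` reduces to this case; the concave case follows by passing to `-φ`.
-/

/-- `Φ(x,y,z) = min{√x, √y, √z, √((x+y-z)₊)}`. -/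
noncomputable def Phi3 (x y z : ℝ) : ℝ :=
  min (Real.sqrt x) (min (Real.sqrt y) (min (Real.sqrt z) (Real.sqrt (max (x + y - z) 0))))

/-- `H_φ(x,y,z) = φ(z) + φ(x+y-z) - φ(x) - φ(y)`. -/
def Hfun (φ : ℝ → ℝ) (x y z : ℝ) : ℝ := φ z + φ (x + y - z) - φ x - φ y

/-- The product `H_φ Φ`, taken to be `0` whenever `x + y - z < 0`. -/
noncomputable def HPhi (φ : ℝ → ℝ) (x y z : ℝ) : ℝ :=
  if x + y - z < 0 then 0 else Hfun φ x y z * Phi3 x y z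

/-- The symmetrized collision functional `𝓖_φ`. -/
noncomputable def Gfun (φ : ℝ → ℝ) (ε : Fin 3 → ℝ) : ℝ :=
  (1 / 6) * ∑ σ : Equiv.Perm (Fin 3), HPhi φ (ε (σ 0)) (ε (σ 1)) (ε (σ 2))

open Set

theorem ConvexOn.map_add_map_le {s : Set ℝ} {f : ℝ → ℝ} (hf : ConvexOn ℝ s f) {a b x y : ℝ}
    (ha : a ∈ s) (hb : b ∈ s) (hax : a ≤ x) (hxb : x ≤ b) (hsum : x + y = a + b) :
    f x + f y ≤ f a + f b := by
  set θ := (b - x) / (b - a)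
  have hθ : θ * (b - a) = b - x := div_mul_cancel_of_imp fun h => by linarith
  have hθ0 : 0 ≤ θ := div_nonneg (by linarith) (by linarith)
  have hθ1 : θ ≤ 1 := div_le_one_of_le₀ (by linarith) (by linarith)
  have hx := hf.2 ha hb hθ0 (sub_nonneg.2 hθ1) (add_sub_cancel θ 1)
  have hy := hf.2 ha hb (sub_nonneg.2 hθ1) hθ0 (sub_add_cancel 1 θ)
  simp only [smul_eq_mul] at hx hy
  rw [show θ * a + (1 - θ) * b = x by linear_combination -hθ] at hx
  rw [show (1 - θ) * a + θ * b = y by linear_combination hθ - hsum] at hy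
  linarith

theorem Fintype.sum_perm_fin_three {M : Type*} [AddCommMonoid M] (f : Fin 3 → Fin 3 → Fin 3 → M) :
    ∑ σ : Equiv.Perm (Fin 3), f (σ 0) (σ 1) (σ 2) =
      f 0 1 2 + f 0 2 1 + f 1 0 2 + f 1 2 0 + f 2 1 0 + f 2 0 1 := by
  conv_lhs => rw [show (2 : Fin 3) = Fin.succ 1 from rfl]
  simp only [← Equiv.sum_comp Equiv.Perm.decomposeFin.symm, Fintype.sum_prod_type,
    Fin.sum_univ_succ, Equiv.Perm.decomposeFin_symm_apply_succ]
  simp [Equiv.swap_apply_def, add_assoc]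

lemma Phi3_nonneg (x y z : ℝ) : 0 ≤ Phi3 x y z :=
  le_min (Real.sqrt_nonneg _) (le_min (Real.sqrt_nonneg _)
    (le_min (Real.sqrt_nonneg _) (Real.sqrt_nonneg _)))

lemma HPhi_comm (φ : ℝ → ℝ) (x y z : ℝ) : HPhi φ x y z = HPhi φ y x z := by
  unfold HPhi Hfun Phi3
  rw [add_comm x y, min_left_comm (Real.sqrt x)]
  ring_nf

lemma HPhi_neg (φ : ℝ → ℝ) (x y z : ℝ) : HPhi (-φ) x y z = -HPhi φ x y z := by
  unfold HPhi Hfun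
  split_ifs
  · exact neg_zero.symm
  · simp only [Pi.neg_apply]
    ring

lemma Gfun_neg (φ : ℝ → ℝ) (ε : Fin 3 → ℝ) : Gfun (-φ) ε = -Gfun φ ε := by
  simp only [Gfun, HPhi_neg, Finset.sum_neg_distrib, mul_neg]

lemma Gfun_comp_perm (φ : ℝ → ℝ) (ε : Fin 3 → ℝ) (τ : Equiv.Perm (Fin 3)) :
    Gfun φ (ε ∘ τ) = Gfun φ ε := by
  unfold Gfun
  congr 1
  exact Equiv.sum_comp (Equiv.mulLeft τ) fun σ => HPhi φ (ε (σ 0)) (ε (σ 1)) (ε (σ 2))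

lemma Gfun_eq_sum_orderings (φ : ℝ → ℝ) (ε : Fin 3 → ℝ) :
    Gfun φ ε = (1 / 6) * (HPhi φ (ε 0) (ε 1) (ε 2) + HPhi φ (ε 0) (ε 2) (ε 1) +
      HPhi φ (ε 1) (ε 0) (ε 2) + HPhi φ (ε 1) (ε 2) (ε 0) +
      HPhi φ (ε 2) (ε 1) (ε 0) + HPhi φ (ε 2) (ε 0) (ε 1)) := by
  rw [Gfun, Fintype.sum_perm_fin_three fun i j k => HPhi φ (ε i) (ε j) (ε k)]

section Convex

variable {φ : ℝ → ℝ} (hφ : ConvexOn ℝ (Ici 0) φ)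
include hφ

lemma HPhi_nonneg_of_le {x y z : ℝ} (hxz : x ≤ z) (hyz : y ≤ z) : 0 ≤ HPhi φ x y z := by
  unfold HPhi
  split_ifs with hneg
  · rfl
  · rw [not_lt] at hneg
    have h := hφ.map_add_map_le (a := x + y - z) (b := z) hneg (by simp only [mem_Ici]; linarith)
      (by linarith) hxz (by ring : x + y = x + y - z + z)
    exact mul_nonneg (by unfold Hfun; linarith) (Phi3_nonneg x y z)

lemma HPhi_add_HPhi_nonneg {a b c : ℝ} (ha : 0 ≤ a) (hab : a ≤ b) (hbc : b ≤ c) :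
    0 ≤ HPhi φ a c b + HPhi φ b c a := by
  have hPhi_acb : Phi3 a c b = √a :=
    min_eq_left (le_min (Real.sqrt_le_sqrt (hab.trans hbc)) (le_min (Real.sqrt_le_sqrt hab)
      (Real.sqrt_le_sqrt (le_max_of_le_left (by linarith)))))
  have hPhi_bca : Phi3 b c a = √a := by
    unfold Phi3
    rw [min_eq_left (Real.sqrt_le_sqrt (le_max_of_le_left (by linarith : a ≤ b + c - a))),
      min_eq_right (Real.sqrt_le_sqrt (hab.trans hbc)), min_eq_right (Real.sqrt_le_sqrt hab)]
  have hH : 0 ≤ Hfun φ a c b + Hfun φ b c a := by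
    have h := hφ.map_add_map_le (a := a + c - b) (b := b + c - a) (x := c) (y := c)
      (by simp only [mem_Ici]; linarith) (by simp only [mem_Ici]; linarith)
      (by linarith) (by linarith) (by ring)
    unfold Hfun
    linarith
  unfold HPhi
  rw [if_neg (not_lt.2 (by linarith)), if_neg (not_lt.2 (by linarith)), hPhi_acb, hPhi_bca,
    ← add_mul]
  exact mul_nonneg hH (Real.sqrt_nonneg a)

lemma ConvexOn.Gfun_nonneg_of_monotone {ε : Fin 3 → ℝ} (hε₀ : 0 ≤ ε 0) (hε : Monotone ε) :
    0 ≤ Gfun φ ε := by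
  have h01 : ε 0 ≤ ε 1 := hε (by decide)
  have h12 : ε 1 ≤ ε 2 := hε (by decide)
  rw [Gfun_eq_sum_orderings, HPhi_comm φ (ε 1) (ε 0), HPhi_comm φ (ε 2) (ε 0),
    HPhi_comm φ (ε 2) (ε 1)]
  have h₁ := HPhi_nonneg_of_le hφ (h01.trans h12) h12
  have h₂ := HPhi_add_HPhi_nonneg hφ hε₀ h01 h12
  linarith

lemma ConvexOn.Gfun_nonneg {ε : Fin 3 → ℝ} (hε : ∀ i, 0 ≤ ε i) : 0 ≤ Gfun φ ε := by
  rw [← Gfun_comp_perm φ ε (Tuple.sort ε)]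
  exact hφ.Gfun_nonneg_of_monotone (hε _) (Tuple.monotone_sort ε)

end Convex

lemma ConcaveOn.Gfun_nonpos {φ : ℝ → ℝ} (hφ : ConcaveOn ℝ (Ici 0) φ) {ε : Fin 3 → ℝ}
    (hε : ∀ i, 0 ≤ ε i) : Gfun φ ε ≤ 0 := by
  simpa [Gfun_neg] using hφ.neg.Gfun_nonneg hε

theorem stmt8 (φ : ℝ → ℝ) (ε : Fin 3 → ℝ) (hε : ∀ i, 0 < ε i) :
    (ConvexOn ℝ (Set.Ici 0) φ → 0 ≤ Gfun φ ε) ∧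
    (ConcaveOn ℝ (Set.Ici 0) φ → Gfun φ ε ≤ 0) :=
  ⟨fun hφ => hφ.Gfun_nonneg fun i => (hε i).le, fun hφ => hφ.Gfun_nonpos fun i => (hε i).le⟩
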